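/- Relative operator entropy bounds for matrices: let A be positive definite, B positive definite with mA ≤ B ≤ MA, 0 < m < M. Then L̃(A|B) - (1/(2M²))·K(A,B) ≤ S(A|B) ≤ L̃(A|B) - (1/(2m²))·K(A,B) in the Loewner order, where S(A|B) = A^{1/2} log(A^{-1/2}BA^{-1/2}) A^{1/2}, K(A,B) = A♮₂B + MmA - (M+m)B, and L̃(A|B) = ((B - mA)log M + (MA - B)log m)/(M-m). -/

import Mathlib

/-!
Put `C = A^{-1/2} B A^{-1/2}`. The hypothesis `m A ≤ B ≤ M A` says that the spectrum of `C` lies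
in `[m, M]`, and `S(A|B)`, `L̃(A|B)` and `K(A,B)` are the congruences by `A^{1/2}` of `log C`,
`ℓ(C)` and `(C - m)(C - M)`, where `ℓ` is the secant of `log` through `m` and `M`. Congruence and
the functional calculus are monotone, so everything reduces to the scalar inequalities
`ℓ x - c (x - m)(x - M) ≤ log x` for `c ≤ 1/(2M²)` and `≥` for `c ≥ 1/(2m²)` on `[m, M]`. They say
that `x ↦ log x + c x²` lies above (resp. below) its secant on `[m, M]`, which holds because its
second derivative `2c - 1/x²` is `≤ 0` (resp. `≥ 0`) there.
-/

open Matrix ComplexOrder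
noncomputable def Matrix.PosSemidef.sqrt {n : Type*} [Fintype n] [DecidableEq n] {𝕜 : Type*}
    [RCLike 𝕜] {A : Matrix n n 𝕜} (hA : A.PosSemidef) : Matrix n n 𝕜 :=
  hA.1.eigenvectorUnitary.1 * diagonal ((↑) ∘ (√·) ∘ hA.1.eigenvalues) *
  (star hA.1.eigenvectorUnitary : Matrix n n 𝕜)

open Real Set
open scoped MatrixOrder

section Secant

variable {𝕜 : Type*} [Field 𝕜] [LinearOrder 𝕜] [IsStrictOrderedRing 𝕜] {s : Set 𝕜} {f : 𝕜 → 𝕜}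
  {a b x : 𝕜}

theorem ConvexOn.le_secant (hf : ConvexOn 𝕜 s f) (ha : a ∈ s) (hb : b ∈ s) (hab : a < b)
    (hx : x ∈ Icc a b) : f x ≤ ((b - x) * f a + (x - a) * f b) / (b - a) := by
  have hba : 0 < b - a := sub_pos.mpr hab
  have key := hf.2 ha hb (div_nonneg (sub_nonneg.mpr hx.2) hba.le)
    (div_nonneg (sub_nonneg.mpr hx.1) hba.le) (by field)
  have hcomb : (b - x) / (b - a) * a + (x - a) / (b - a) * b = x := by field
  simp only [smul_eq_mul, hcomb] at key
  rwa [add_div, mul_div_right_comm, mul_div_right_comm (x - a)]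

theorem ConcaveOn.secant_le (hf : ConcaveOn 𝕜 s f) (ha : a ∈ s) (hb : b ∈ s) (hab : a < b)
    (hx : x ∈ Icc a b) : ((b - x) * f a + (x - a) * f b) / (b - a) ≤ f x := by
  have := hf.neg.le_secant ha hb hab hx
  simp only [Pi.neg_apply, mul_neg, ← neg_add, neg_div] at this
  exact neg_le_neg_iff.mp this

end Secant

section LogAddMulSq

variable {c m M : ℝ}

theorem hasDerivAt_log_add_mul_sq (c : ℝ) {x : ℝ} (hx : x ≠ 0) :
    HasDerivAt (fun x => log x + c * x ^ 2) (x⁻¹ + 2 * c * x) x := by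
  refine ((hasDerivAt_log hx).add ((hasDerivAt_pow 2 x).const_mul c)).congr_deriv ?_
  ring

theorem hasDerivAt_inv_add_two_mul (c : ℝ) {x : ℝ} (hx : x ≠ 0) :
    HasDerivAt (fun x => x⁻¹ + 2 * c * x) (-(x ^ 2)⁻¹ + 2 * c) x := by
  refine ((hasDerivAt_inv hx).add ((hasDerivAt_id x).const_mul (2 * c))).congr_deriv ?_
  ring

theorem concaveOn_log_add_mul_sq (hc : c ≤ 1 / (2 * M ^ 2)) :
    ConcaveOn ℝ (Ioc 0 M) (fun x => log x + c * x ^ 2) := by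
  refine concaveOn_of_hasDerivWithinAt2_nonpos (convex_Ioc 0 M) (f' := fun x => x⁻¹ + 2 * c * x)
    (f'' := fun x => -(x ^ 2)⁻¹ + 2 * c)
    ((continuousOn_log.mono fun x hx => hx.1.ne').add (by fun_prop))
    (fun x hx => (hasDerivAt_log_add_mul_sq c (interior_subset hx).1.ne').hasDerivWithinAt)
    (fun x hx => (hasDerivAt_inv_add_two_mul c (interior_subset hx).1.ne').hasDerivWithinAt)
    fun x hx => ?_
  rw [interior_Ioc] at hx
  have hx0 : 0 < x := hx.1
  have hcx : c ≤ 1 / (2 * x ^ 2) :=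
    hc.trans (one_div_le_one_div_of_le (by positivity) (by gcongr; exact hx.2.le))
  have : 1 / (2 * x ^ 2) = (x ^ 2)⁻¹ / 2 := by ring
  linarith

theorem convexOn_log_add_mul_sq (hm : 0 < m) (hc : 1 / (2 * m ^ 2) ≤ c) :
    ConvexOn ℝ (Ici m) (fun x => log x + c * x ^ 2) := by
  have hne (x : ℝ) (hx : x ∈ Ici m) : x ≠ 0 := (hm.trans_le hx).ne'
  refine convexOn_of_hasDerivWithinAt2_nonneg (convex_Ici m) (f' := fun x => x⁻¹ + 2 * c * x)
    (f'' := fun x => -(x ^ 2)⁻¹ + 2 * c) ((continuousOn_log.mono hne).add (by fun_prop))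
    (fun x hx => (hasDerivAt_log_add_mul_sq c (hne x (interior_subset hx))).hasDerivWithinAt)
    (fun x hx => (hasDerivAt_inv_add_two_mul c (hne x (interior_subset hx))).hasDerivWithinAt)
    fun x hx => ?_
  rw [interior_Ici] at hx
  have hcx : 1 / (2 * x ^ 2) ≤ c :=
    (one_div_le_one_div_of_le (by positivity) (by gcongr; exact hx.le)).trans hc
  have : 1 / (2 * x ^ 2) = (x ^ 2)⁻¹ / 2 := by ring
  linarith

end LogAddMulSq

/-- `entropyBound m M c x = L̃(1|x) - c K(1,x)`; note `K(1,x) = (x - m)(x - M)`. -/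
noncomputable def entropyBound (m M c x : ℝ) : ℝ :=
  (M - m)⁻¹ * (log M * (x - m) + log m * (M - x)) - c * (x ^ 2 + M * m - (M + m) * x)

section EntropyBound

variable {m M c x : ℝ}

theorem entropyBound_eq_secant_sub (hmM : m < M) : entropyBound m M c x =
    ((M - x) * (log m + c * m ^ 2) + (x - m) * (log M + c * M ^ 2)) / (M - m) - c * x ^ 2 := by
  have : M - m ≠ 0 := sub_ne_zero.mpr hmM.ne'
  unfold entropyBound
  field_simp
  ring

theorem entropyBound_le_log (hm : 0 < m) (hmM : m < M) (hc : c ≤ 1 / (2 * M ^ 2))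
    (hx : x ∈ Icc m M) : entropyBound m M c x ≤ log x := by
  have := (concaveOn_log_add_mul_sq hc).secant_le ⟨hm, hmM.le⟩ ⟨hm.trans hmM, le_rfl⟩ hmM hx
  rw [entropyBound_eq_secant_sub hmM]
  linarith

theorem log_le_entropyBound (hm : 0 < m) (hmM : m < M) (hc : 1 / (2 * m ^ 2) ≤ c)
    (hx : x ∈ Icc m M) : log x ≤ entropyBound m M c x := by
  have := (convexOn_log_add_mul_sq hm hc).le_secant self_mem_Ici hmM.le hmM hx
  rw [entropyBound_eq_secant_sub hmM]
  linarith

end EntropyBound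

section FunctionalCalculus

variable {A : Type*} [Ring A] [StarRing A] [Algebra ℝ A] [TopologicalSpace A]
  [ContinuousFunctionalCalculus ℝ A IsSelfAdjoint]

theorem cfc_entropyBound (m M c : ℝ) (a : A) (ha : IsSelfAdjoint a := by cfc_tac) :
    cfc (entropyBound m M c) a = (M - m)⁻¹ • (log M • (a - m • 1) + log m • (M • 1 - a)) -
      c • (a ^ 2 + (M * m) • 1 - (M + m) • a) := by
  unfold entropyBound
  rw [cfc_sub .., cfc_const_mul .., cfc_const_mul .., cfc_add .., cfc_const_mul .., cfc_const_mul ..,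
    cfc_sub .., cfc_sub .., cfc_sub .., cfc_add .., cfc_pow .., cfc_const_mul (M + m) (fun x => x) a,
    cfc_id' .., cfc_const .., cfc_const .., cfc_const ..]
  simp only [Algebra.algebraMap_eq_smul_one]

theorem mul_cfc_entropyBound_mul (m M c : ℝ) (s a : A) (ha : IsSelfAdjoint a := by cfc_tac) :
    s * cfc (entropyBound m M c) a * s =
      (M - m)⁻¹ • (log M • (s * a * s - m • (s * s)) + log m • (M • (s * s) - s * a * s)) -
        c • (s * a ^ 2 * s + (M * m) • (s * s) - (M + m) • (s * a * s)) := by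
  rw [cfc_entropyBound m M c a]
  simp only [mul_sub, sub_mul, mul_add, add_mul, mul_smul_comm, smul_mul_assoc, mul_one]

end FunctionalCalculus

namespace Matrix

variable {n 𝕜 : Type*} [Fintype n] [DecidableEq n] [RCLike 𝕜]

theorem PosSemidef.sqrt_eq_cfcSqrt {A : Matrix n n 𝕜} (hA : A.PosSemidef) :
    hA.sqrt = CFC.sqrt A := by
  rw [CFC.sqrt_eq_real_sqrt A hA.nonneg, cfcₙ_eq_cfc, hA.1.cfc_eq]
  rfl

theorem isSelfAdjoint_inv_mul_mul_inv {S B : Matrix n n 𝕜} (hS : IsSelfAdjoint S)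
    (hB : IsSelfAdjoint B) : IsSelfAdjoint (S⁻¹ * B * S⁻¹) := by
  simpa [(IsHermitian.inv hS).star_eq] using hB.conjugate S⁻¹

theorem spectrum_inv_mul_mul_inv_subset_Icc {S B : Matrix n n 𝕜} {m M : ℝ} (hS : IsUnit S)
    (hSa : IsSelfAdjoint S) (hB : IsSelfAdjoint B) (hmB : m • (S * S) ≤ B)
    (hBM : B ≤ M • (S * S)) : spectrum ℝ (S⁻¹ * B * S⁻¹) ⊆ Icc m M := by
  have hdet := (isUnit_iff_isUnit_det S).mp hS
  have hSi : IsSelfAdjoint S⁻¹ := IsHermitian.inv hSa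
  have hconj (r : ℝ) : S⁻¹ * (r • (S * S)) * S⁻¹ = algebraMap ℝ _ r := by
    rw [Algebra.algebraMap_eq_smul_one, mul_smul_comm, smul_mul_assoc, ← mul_assoc,
      nonsing_inv_mul S hdet, one_mul, mul_nonsing_inv S hdet]
  have hC := isSelfAdjoint_inv_mul_mul_inv hSa hB
  intro x hx
  exact ⟨(algebraMap_le_iff_le_spectrum hC).mp (hconj m ▸ hSi.conjugate_le_conjugate hmB) x hx,
    (le_algebraMap_iff_spectrum_le hC).mp (hconj M ▸ hSi.conjugate_le_conjugate hBM) x hx⟩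

end Matrix

/-- Relative operator entropy bounds: let `A`, `B` be positive definite with
`m • A ≤ B ≤ M • A` in the Loewner order, `0 < m < M`.  With
`S(A|B) = √A · log(√A⁻¹ B √A⁻¹) · √A`, `A ♮₂ B = √A · (√A⁻¹ B √A⁻¹)² · √A`,
`K(A,B) = A ♮₂ B + M m A - (M+m) B` and
`L̃(A|B) = ((B - m A) log M + (M A - B) log m)/(M - m)`, one has
`L̃(A|B) - (1/(2M²)) K(A,B) ≤ S(A|B) ≤ L̃(A|B) - (1/(2m²)) K(A,B)` in the Loewner
order. -/
theorem relative_operator_entropy_bounds {n : ℕ} (A B : Matrix (Fin n) (Fin n) ℂ)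
    (hA : A.PosDef) (hB : B.PosDef) (m M : ℝ) (hm : 0 < m) (hmM : m < M)
    (hmA : (B - m • A).PosSemidef) (hMA : (M • A - B).PosSemidef) :
    let S := hA.posSemidef.sqrt
    let C := S⁻¹ * B * S⁻¹
    let Sent := S * cfc Real.log C * S
    let K := S * C ^ 2 * S + (M * m) • A - (M + m) • B
    let L := (M - m)⁻¹ • (Real.log M • (B - m • A) + Real.log m • (M • A - B))
    (Sent - (L - (1 / (2 * M ^ 2)) • K)).PosSemidef ∧
      ((L - (1 / (2 * m ^ 2)) • K) - Sent).PosSemidef := by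
  intro S C Sent K L
  obtain ⟨hS, hSS, hSu⟩ : 0 ≤ S ∧ S * S = A ∧ IsUnit S := by
    rw [show S = CFC.sqrt A from hA.posSemidef.sqrt_eq_cfcSqrt]
    exact ⟨CFC.sqrt_nonneg A, CFC.sqrt_mul_sqrt_self A, hA.isStrictlyPositive.sqrt.isUnit⟩
  have hSCS : S * C * S = B := by
    have hdet := (isUnit_iff_isUnit_det S).mp hSu
    simp only [C, ← mul_assoc, mul_nonsing_inv S hdet, one_mul, mul_assoc B,
      nonsing_inv_mul S hdet, mul_one]
  have hC : IsSelfAdjoint C := isSelfAdjoint_inv_mul_mul_inv hS.isSelfAdjoint hB.isHermitian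
  have hspec : spectrum ℝ C ⊆ Icc m M :=
    spectrum_inv_mul_mul_inv_subset_Icc hSu hS.isSelfAdjoint hB.isHermitian
      (by rwa [hSS, le_iff]) (by rwa [hSS, le_iff])
  have hL (c : ℝ) : L - c • K = S * cfc (entropyBound m M c) C * S := by
    rw [mul_cfc_entropyBound_mul m M c S C, hSS, hSCS]
  have hcont (f : ℝ → ℝ) : ContinuousOn f (spectrum ℝ C) := C.finite_real_spectrum.continuousOn f
  constructor
  · refine le_iff.mp ?_
    rw [hL]
    exact conjugate_le_conjugate_of_nonneg
      (cfc_mono (fun x hx => entropyBound_le_log hm hmM le_rfl (hspec hx)) (hcont _) (hcont _)) hS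
  · refine le_iff.mp ?_
    rw [hL]
    exact conjugate_le_conjugate_of_nonneg
      (cfc_mono (fun x hx => log_le_entropyBound hm hmM le_rfl (hspec hx)) (hcont _) (hcont _)) hS
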